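/- arXiv:2302.02193 — 2 statements merged into one kernel-verified Lean document; each statement's English description precedes it below -/
import Mathlib

section
/- Suppose A ∈ ℝ^{m×n} satisfies Aᵀ ŷ = 0 for some ŷ > 0 componentwise. Then H₀(A) ≤ sup over v ∈ Aᵀ(ℝ^m) with ‖v‖* ≤ 1 of the minimum of ‖y‖* over y ∈ ℝ^m₊ with Aᵀ y = v. -/
/-- The dual norm of a (semi)norm `ν` on `Fin k → ℝ` with respect to the
canonical inner product: `‖v‖* = sup_{ν x ≤ 1} ⟪v, x⟫`. -/
noncomputable def dualNorm {k : ℕ} (ν : Seminorm ℝ (Fin k → ℝ)) (v : Fin k → ℝ) : ℝ :=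
  sSup {r | ∃ x : Fin k → ℝ, ν x ≤ 1 ∧ r = ∑ i, v i * x i}

/-!
Let `d` be the `nn`-distance from `u` to `P`. Since `ker A ⊆ P`, Hahn–Banach applied to `nn` and
`ker A` gives a functional `v` with `‖v‖* ≤ 1`, vanishing on `ker A` and with `v u = d`; vanishing on
`ker A` means `v = Aᵀ w`. For every `y ≥ 0` with `Aᵀ y = v`,
`d = ⟪Aᵀ y, u⟫ = ⟪y, A u⟫ ≤ ⟪y, (A u)⁺⟫ ≤ ‖y‖* ‖(A u)⁺‖`, and taking the infimum over `y` gives the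
bound. The positive vector `yhat ∈ ker Aᵀ` is what makes such `y` exist (add a multiple of `yhat`
to any preimage), with norm controlled by `‖v‖`; this keeps the supremum finite, which matters
because `sSup` of an unbounded set of reals is `0`.
-/

open Matrix Module

theorem Seminorm.exists_pos_mul_norm_le {E : Type*} [NormedAddCommGroup E] [NormedSpace ℝ E]
    [FiniteDimensional ℝ E] (ν : Seminorm ℝ E) (hν : ∀ x, ν x = 0 → x = 0) :
    ∃ ε > 0, ∀ x, ε * ‖x‖ ≤ ν x := by
  rcases subsingleton_or_nontrivial E with hE | hE
  · exact ⟨1, one_pos, fun x => by simp [Subsingleton.elim x 0]⟩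
  obtain ⟨x₀, hx₀, hmin⟩ := (isCompact_sphere (0 : E) 1).exists_isMinOn
    (NormedSpace.sphere_nonempty.2 zero_le_one) ν.convexOn.locallyLipschitz.continuous.continuousOn
  have hx₀0 : x₀ ≠ 0 := ne_zero_of_mem_unit_sphere ⟨x₀, hx₀⟩
  refine ⟨ν x₀, (apply_nonneg ν x₀).lt_of_ne' (mt (hν x₀) hx₀0), fun x => ?_⟩
  rcases eq_or_ne x 0 with rfl | hx
  · simp
  have hxn : 0 < ‖x‖ := norm_pos_iff.2 hx
  have hmem : ‖x‖⁻¹ • x ∈ Metric.sphere (0 : E) 1 := by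
    simp [norm_smul, hxn.ne']
  have : ν x₀ ≤ ν (‖x‖⁻¹ • x) := hmin hmem
  rw [map_smul_eq_mul, norm_inv, norm_norm] at this
  rwa [← div_eq_inv_mul, le_div_iff₀ hxn] at this

theorem Seminorm.exists_linearMap_le_of_forall_le_sub {E : Type*} [AddCommGroup E] [Module ℝ E]
    (ν : Seminorm ℝ E) (K : Submodule ℝ E) {u : E} {d : ℝ} (hd0 : 0 ≤ d)
    (hd : ∀ k ∈ K, d ≤ ν (u - k)) :
    ∃ g : E →ₗ[ℝ] ℝ, (∀ x, g x ≤ ν x) ∧ K ≤ LinearMap.ker g ∧ g u = d := by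
  by_cases hu : u ∈ K
  · have : d = 0 := le_antisymm (by simpa using hd u hu) hd0
    exact ⟨0, fun x => by simp, fun _ _ => by simp, by simp [this]⟩
  obtain ⟨φ, hφu, hKφ⟩ := K.exists_le_ker_of_notMem hu
  set g₀ := (d / φ u) • φ
  have hg₀K : ∀ k ∈ K, g₀ k = 0 := fun k hk => by simp [g₀, LinearMap.mem_ker.1 (hKφ hk)]
  have hg₀u : g₀ u = d := by simp [g₀, hφu]
  have hbound : ∀ x : (g₀.toPMap (K ⊔ Submodule.span ℝ {u})).domain,
      g₀.toPMap _ x ≤ ν x := by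
    rintro ⟨x, hx⟩
    obtain ⟨k, hk, _, ht, rfl⟩ := Submodule.mem_sup.mp hx
    obtain ⟨t, rfl⟩ := Submodule.mem_span_singleton.mp ht
    change g₀ (k + t • u) ≤ ν (k + t • u)
    rw [map_add, map_smul, hg₀K k hk, hg₀u, zero_add, smul_eq_mul]
    rcases le_or_gt t 0 with ht | ht
    · exact (mul_nonpos_of_nonpos_of_nonneg ht hd0).trans (apply_nonneg ν _)
    · have hk' : -t⁻¹ • k ∈ K := K.smul_mem _ hk
      calc t * d ≤ t * ν (u - -t⁻¹ • k) := mul_le_mul_of_nonneg_left (hd _ hk') ht.le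
        _ = ν (t • (u - -t⁻¹ • k)) := by
          rw [map_smul_eq_mul, Real.norm_eq_abs, abs_of_pos ht]
        _ = ν (k + t • u) := by
          rw [smul_sub, smul_smul, mul_neg, mul_inv_cancel₀ ht.ne', neg_smul, one_smul,
            sub_neg_eq_add, add_comm]
  obtain ⟨g, hg, hgν⟩ := exists_extension_of_le_sublinear _ ν
    (fun c hc x => by rw [map_smul_eq_mul, Real.norm_eq_abs, abs_of_pos hc])
    (map_add_le_add ν) hbound
  have hg_eq : ∀ x ∈ K ⊔ Submodule.span ℝ {u}, g x = g₀ x := fun x hx => hg ⟨x, hx⟩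
  refine ⟨g, hgν, fun k hk => ?_, ?_⟩
  · rw [LinearMap.mem_ker, hg_eq k (Submodule.mem_sup_left hk), hg₀K k hk]
  · rw [hg_eq u (Submodule.mem_sup_right (Submodule.mem_span_singleton_self u)), hg₀u]

theorem Matrix.exists_eq_dotProduct_mulVec_of_ker_le {K m n : Type*} [Field K] [Fintype m]
    [Fintype n] [DecidableEq m] (A : Matrix m n K) (g : Dual K (n → K))
    (h : LinearMap.ker A.mulVecLin ≤ LinearMap.ker g) :
    ∃ w : m → K, ∀ x, g x = w ⬝ᵥ (A *ᵥ x) := by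
  have hg : g ∈ (LinearMap.ker A.mulVecLin).dualAnnihilator :=
    (Submodule.mem_dualAnnihilator g).2 fun x hx => h hx
  rw [← LinearMap.range_dualMap_eq_dualAnnihilator_ker] at hg
  obtain ⟨ψ, rfl⟩ := hg
  refine ⟨(dotProductEquiv K m).symm ψ, fun x => ?_⟩
  conv_lhs => rw [LinearMap.dualMap_apply, ← (dotProductEquiv K m).apply_symm_apply ψ]
  rfl

theorem dotProduct_le_card_mul_norm_mul_norm {ι : Type*} [Fintype ι] (v x : ι → ℝ) :
    v ⬝ᵥ x ≤ Fintype.card ι * (‖v‖ * ‖x‖) := by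
  calc v ⬝ᵥ x ≤ ∑ _i : ι, ‖v‖ * ‖x‖ := Finset.sum_le_sum fun i _ =>
        (le_abs_self _).trans <| (abs_mul (v i) (x i)).trans_le <|
          mul_le_mul (norm_le_pi_norm v i) (norm_le_pi_norm x i) (abs_nonneg _) (norm_nonneg _)
    _ = Fintype.card ι * (‖v‖ * ‖x‖) := by simp

section DualNorm

variable {k : ℕ} {ν : Seminorm ℝ (Fin k → ℝ)}

theorem exists_dotProduct_le_mul_norm_of_le_one (hν : ∀ x, ν x = 0 → x = 0) :
    ∃ C ≥ 0, ∀ v x, ν x ≤ 1 → v ⬝ᵥ x ≤ C * ‖v‖ := by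
  obtain ⟨ε, hε, hνε⟩ := ν.exists_pos_mul_norm_le hν
  refine ⟨k / ε, by positivity, fun v x hx => ?_⟩
  have hxε : ‖x‖ ≤ 1 / ε := by rw [le_div_iff₀' hε]; exact (hνε x).trans hx
  calc v ⬝ᵥ x ≤ k * (‖v‖ * ‖x‖) := by simpa using dotProduct_le_card_mul_norm_mul_norm v x
    _ ≤ k * (‖v‖ * (1 / ε)) := by gcongr
    _ = k / ε * ‖v‖ := by ring

theorem dualNorm_bddAbove (hν : ∀ x, ν x = 0 → x = 0) (v : Fin k → ℝ) :
    BddAbove {r | ∃ x : Fin k → ℝ, ν x ≤ 1 ∧ r = ∑ i, v i * x i} := by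
  obtain ⟨C, -, hC⟩ := exists_dotProduct_le_mul_norm_of_le_one hν
  exact ⟨C * ‖v‖, by rintro _ ⟨x, hx, rfl⟩; exact hC v x hx⟩

theorem dotProduct_le_dualNorm (hν : ∀ x, ν x = 0 → x = 0) (v : Fin k → ℝ) {x : Fin k → ℝ}
    (hx : ν x ≤ 1) : v ⬝ᵥ x ≤ dualNorm ν v :=
  le_csSup (dualNorm_bddAbove hν v) ⟨x, hx, rfl⟩

theorem dualNorm_nonneg (hν : ∀ x, ν x = 0 → x = 0) (v : Fin k → ℝ) : 0 ≤ dualNorm ν v := by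
  simpa using dotProduct_le_dualNorm hν v (x := 0) (by simp)

theorem dualNorm_le {v : Fin k → ℝ} {B : ℝ} (h : ∀ x, ν x ≤ 1 → v ⬝ᵥ x ≤ B) :
    dualNorm ν v ≤ B :=
  csSup_le ⟨0, 0, by simp, by simp⟩ (by rintro _ ⟨x, hx, rfl⟩; exact h x hx)

theorem exists_dualNorm_le_mul_norm (hν : ∀ x, ν x = 0 → x = 0) :
    ∃ C ≥ 0, ∀ v, dualNorm ν v ≤ C * ‖v‖ := by
  obtain ⟨C, hC0, hC⟩ := exists_dotProduct_le_mul_norm_of_le_one hν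
  exact ⟨C, hC0, fun v => dualNorm_le fun x hx => hC v x hx⟩

theorem dotProduct_le_dualNorm_mul (hν : ∀ x, ν x = 0 → x = 0) (v x : Fin k → ℝ) :
    v ⬝ᵥ x ≤ dualNorm ν v * ν x := by
  rcases (apply_nonneg ν x).eq_or_lt with h | h
  · simp [hν x h.symm]
  have := dotProduct_le_dualNorm hν v (x := (ν x)⁻¹ • x) (by
    rw [map_smul_eq_mul, Real.norm_eq_abs, abs_of_pos (inv_pos.2 h), inv_mul_cancel₀ h.ne'])
  rwa [dotProduct_smul, smul_eq_mul, ← div_eq_inv_mul, div_le_iff₀ h] at this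

theorem abs_apply_le_dualNorm_mul (hν : ∀ x, ν x = 0 → x = 0) (v : Fin k → ℝ) (i : Fin k) :
    |v i| ≤ dualNorm ν v * ν (Pi.single i 1) := by
  have h := dotProduct_le_dualNorm_mul hν v (Pi.single i 1)
  have h' := dotProduct_le_dualNorm_mul hν v (-Pi.single i 1)
  rw [dotProduct_single, mul_one] at h
  rw [dotProduct_neg, dotProduct_single, mul_one, map_neg_eq_map] at h'
  exact abs_le.2 ⟨by linarith, h⟩

theorem norm_le_of_dualNorm_le_one (hν : ∀ x, ν x = 0 → x = 0) {v : Fin k → ℝ}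
    (hv : dualNorm ν v ≤ 1) : ‖v‖ ≤ ∑ i, ν (Pi.single i 1) := by
  refine (pi_norm_le_iff_of_nonneg (by positivity)).2 fun i => ?_
  calc ‖v i‖ ≤ dualNorm ν v * ν (Pi.single i 1) := abs_apply_le_dualNorm_mul hν v i
    _ ≤ ν (Pi.single i 1) := mul_le_of_le_one_left (apply_nonneg _ _) hv
    _ ≤ ∑ i, ν (Pi.single i 1) :=
      Finset.single_le_sum (f := fun j => ν (Pi.single j 1)) (fun j _ => apply_nonneg ν _)
        (Finset.mem_univ i)

theorem dotProduct_le_dualNorm_mul_posPart (hν : ∀ x, ν x = 0 → x = 0) {y : Fin k → ℝ}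
    (hy : ∀ i, 0 ≤ y i) (a : Fin k → ℝ) :
    y ⬝ᵥ a ≤ dualNorm ν y * ν (fun i => max (a i) 0) :=
  (dotProduct_le_dotProduct_of_nonneg_left (fun _ => le_max_left _ _) hy).trans
    (dotProduct_le_dualNorm_mul hν _ _)

end DualNorm

theorem LinearMap.exists_preimage_norm_le_of_mem_range {E F : Type*} [NormedAddCommGroup E]
    [NormedSpace ℝ E] [FiniteDimensional ℝ E] [NormedAddCommGroup F] [NormedSpace ℝ F]
    (f : E →ₗ[ℝ] F) : ∃ C ≥ 0, ∀ v ∈ LinearMap.range f, ∃ x, f x = v ∧ ‖x‖ ≤ C * ‖v‖ := by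
  obtain ⟨C, hC, h⟩ := (LinearMap.toContinuousLinearMap f.rangeRestrict).exists_preimage_norm_le
    f.surjective_rangeRestrict
  refine ⟨C, hC.le, fun v hv => ?_⟩
  obtain ⟨x, hx, hxC⟩ := h ⟨v, hv⟩
  exact ⟨x, congrArg Subtype.val hx, hxC⟩

theorem Matrix.exists_nonneg_mulVec_eq_norm_le {m n : Type*} [Fintype m] [Fintype n]
    (B : Matrix n m ℝ) {ŷ : m → ℝ} (hŷ : ∀ i, 0 < ŷ i) (hBŷ : B *ᵥ ŷ = 0) :
    ∃ C ≥ 0, ∀ w, ∃ y, (∀ i, 0 ≤ y i) ∧ B *ᵥ y = B *ᵥ w ∧ ‖y‖ ≤ C * ‖w‖ := by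
  set c := ∑ j, (ŷ j)⁻¹
  have hc0 : 0 ≤ c := Finset.sum_nonneg fun j _ => (inv_pos.2 (hŷ j)).le
  have hcŷ : ∀ i, 1 ≤ c * ŷ i := fun i => by
    calc 1 = (ŷ i)⁻¹ * ŷ i := (inv_mul_cancel₀ (hŷ i).ne').symm
      _ ≤ c * ŷ i := mul_le_mul_of_nonneg_right (Finset.single_le_sum (f := fun j => (ŷ j)⁻¹)
          (fun j _ => (inv_pos.2 (hŷ j)).le) (Finset.mem_univ i)) (hŷ i).le
  refine ⟨1 + c * ‖ŷ‖, by positivity, fun w => ⟨w + (c * ‖w‖) • ŷ, fun i => ?_, ?_, ?_⟩⟩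
  · have hwi : -‖w‖ ≤ w i := neg_le_of_abs_le (norm_le_pi_norm w i)
    have : ‖w‖ ≤ c * ‖w‖ * ŷ i := by
      nlinarith [mul_le_mul_of_nonneg_left (hcŷ i) (norm_nonneg w)]
    simp only [Pi.add_apply, Pi.smul_apply, smul_eq_mul]
    linarith
  · rw [mulVec_add, mulVec_smul, hBŷ, smul_zero, add_zero]
  · calc ‖w + (c * ‖w‖) • ŷ‖ ≤ ‖w‖ + c * ‖w‖ * ‖ŷ‖ := by
          refine (norm_add_le _ _).trans_eq ?_
          rw [norm_smul, Real.norm_of_nonneg (by positivity)]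
      _ = (1 + c * ‖ŷ‖) * ‖w‖ := by ring

theorem Matrix.exists_nonneg_preimage_norm_le {m n : Type*} [Fintype m] [Fintype n]
    (B : Matrix n m ℝ) {ŷ : m → ℝ} (hŷ : ∀ i, 0 < ŷ i) (hBŷ : B *ᵥ ŷ = 0) :
    ∃ C ≥ 0, ∀ v, (∃ w, B *ᵥ w = v) →
      ∃ y, (∀ i, 0 ≤ y i) ∧ B *ᵥ y = v ∧ ‖y‖ ≤ C * ‖v‖ := by
  obtain ⟨C₁, hC₁, hpre⟩ := B.mulVecLin.exists_preimage_norm_le_of_mem_range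
  obtain ⟨C₂, hC₂, hnonneg⟩ := B.exists_nonneg_mulVec_eq_norm_le hŷ hBŷ
  refine ⟨C₂ * C₁, by positivity, fun v hv => ?_⟩
  obtain ⟨x, hxv, hx⟩ := hpre v hv
  obtain ⟨y, hy, hyx, hyC⟩ := hnonneg x
  refine ⟨y, hy, hyx.trans hxv, ?_⟩
  calc ‖y‖ ≤ C₂ * ‖x‖ := hyC
    _ ≤ C₂ * (C₁ * ‖v‖) := by gcongr
    _ = C₂ * C₁ * ‖v‖ := by ring

def nonnegPreimageDualNorms {m n : ℕ} (A : Matrix (Fin m) (Fin n) ℝ)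
    (ν : Seminorm ℝ (Fin m → ℝ)) (v : Fin n → ℝ) : Set ℝ :=
  {s | ∃ y : Fin m → ℝ, (∀ i, 0 ≤ y i) ∧ Aᵀ *ᵥ y = v ∧ s = dualNorm ν y}

theorem bddAbove_sInf_nonnegPreimageDualNorms {m n : ℕ} (A : Matrix (Fin m) (Fin n) ℝ)
    {nn : Seminorm ℝ (Fin n → ℝ)} {nm : Seminorm ℝ (Fin m → ℝ)}
    (hnn : ∀ x, nn x = 0 → x = 0) (hnm : ∀ y, nm y = 0 → y = 0)
    {ŷ : Fin m → ℝ} (hŷ : ∀ i, 0 < ŷ i) (hAŷ : Aᵀ *ᵥ ŷ = 0) :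
    BddAbove {r | ∃ v : Fin n → ℝ, (∃ w, Aᵀ *ᵥ w = v) ∧ dualNorm nn v ≤ 1 ∧
      r = sInf (nonnegPreimageDualNorms A nm v)} := by
  obtain ⟨C₁, hC₁, hpre⟩ := Aᵀ.exists_nonneg_preimage_norm_le hŷ hAŷ
  obtain ⟨C₂, hC₂, hdual⟩ := exists_dualNorm_le_mul_norm hnm
  refine ⟨C₂ * (C₁ * ∑ i, nn (Pi.single i 1)), ?_⟩
  rintro _ ⟨v, hv, hvdual, rfl⟩
  obtain ⟨y, hy, hyv, hyC⟩ := hpre v hv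
  have hbdd : BddBelow (nonnegPreimageDualNorms A nm v) :=
    ⟨0, by rintro _ ⟨y, -, -, rfl⟩; exact dualNorm_nonneg hnm y⟩
  calc sInf (nonnegPreimageDualNorms A nm v) ≤ dualNorm nm y := csInf_le hbdd ⟨y, hy, hyv, rfl⟩
    _ ≤ C₂ * ‖y‖ := hdual y
    _ ≤ C₂ * (C₁ * ‖v‖) := by gcongr
    _ ≤ C₂ * (C₁ * ∑ i, nn (Pi.single i 1)) := by
      gcongr
      exact norm_le_of_dualNorm_le_one hnn hvdual

theorem Matrix.exists_dualNorm_transpose_mulVec_le_one {m n : ℕ} (A : Matrix (Fin m) (Fin n) ℝ)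
    (ν : Seminorm ℝ (Fin n → ℝ)) {u : Fin n → ℝ} {d : ℝ} (hd0 : 0 ≤ d)
    (hd : ∀ x, A *ᵥ x = 0 → d ≤ ν (u - x)) :
    ∃ w, dualNorm ν (Aᵀ *ᵥ w) ≤ 1 ∧ (Aᵀ *ᵥ w) ⬝ᵥ u = d := by
  obtain ⟨g, hgν, hgker, hgu⟩ :=
    ν.exists_linearMap_le_of_forall_le_sub (LinearMap.ker A.mulVecLin) hd0 fun x hx => hd x hx
  obtain ⟨w, hgw⟩ := A.exists_eq_dotProduct_mulVec_of_ker_le g hgker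
  have hg : ∀ x, g x = (Aᵀ *ᵥ w) ⬝ᵥ x := fun x => by
    rw [hgw, dotProduct_mulVec, mulVec_transpose]
  exact ⟨w, dualNorm_le fun x hx => hg x ▸ (hgν x).trans hx, hg u ▸ hgu⟩

theorem le_csInf_mul_of_forall_le {s : Set ℝ} (hs : s.Nonempty) {c d : ℝ} (hc : 0 ≤ c)
    (h : ∀ x ∈ s, d ≤ x * c) : d ≤ sInf s * c := by
  rw [mul_comm, ← smul_eq_mul, ← Real.sInf_smul_of_nonneg hc]
  refine le_csInf (hs.smul_set) ?_
  rintro _ ⟨x, hx, rfl⟩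
  show d ≤ c * x
  rw [mul_comm]
  exact h x hx

theorem stmt6_general {m n : ℕ} (A : Matrix (Fin m) (Fin n) ℝ)
    (nn : Seminorm ℝ (Fin n → ℝ)) (nm : Seminorm ℝ (Fin m → ℝ))
    (hnn : ∀ x, nn x = 0 → x = 0) (hnm : ∀ y, nm y = 0 → y = 0)
    (yhat : Fin m → ℝ) (hyhatpos : ∀ i, 0 < yhat i)
    (hyhat : A.transpose.mulVec yhat = 0) :
    ∀ u : Fin n → ℝ, (¬ ∀ i, A.mulVec u i ≤ 0) →
      sInf {r | ∃ x, (∀ i, A.mulVec x i ≤ 0) ∧ r = nn (u - x)} ≤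
        (sSup {r | ∃ v : Fin n → ℝ, (∃ w, A.transpose.mulVec w = v) ∧
            dualNorm nn v ≤ 1 ∧
            r = sInf {s | ∃ y : Fin m → ℝ, (∀ i, 0 ≤ y i) ∧
              A.transpose.mulVec y = v ∧ s = dualNorm nm y}}) *
          nm (fun i => max (A.mulVec u i) 0) := by
  intro u _
  set z : Fin m → ℝ := fun i => max ((A *ᵥ u) i) 0
  set d := sInf {r | ∃ x, (∀ i, (A *ᵥ x) i ≤ 0) ∧ r = nn (u - x)}
  have hd : ∀ x, A *ᵥ x = 0 → d ≤ nn (u - x) := fun x hx =>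
    csInf_le ⟨0, by rintro _ ⟨x, -, rfl⟩; exact apply_nonneg _ _⟩ ⟨x, fun i => by simp [hx], rfl⟩
  have hd0 : 0 ≤ d := le_csInf ⟨_, 0, fun i => by simp, rfl⟩
    (by rintro _ ⟨x, -, rfl⟩; exact apply_nonneg _ _)
  obtain ⟨w, hv, hvu⟩ := A.exists_dualNorm_transpose_mulVec_le_one nn hd0 hd
  obtain ⟨_, -, hpre⟩ := Aᵀ.exists_nonneg_preimage_norm_le hyhatpos hyhat
  obtain ⟨y, hy, hyw, -⟩ := hpre (Aᵀ *ᵥ w) ⟨w, rfl⟩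
  have hne : (nonnegPreimageDualNorms A nm (Aᵀ *ᵥ w)).Nonempty := ⟨_, y, hy, hyw, rfl⟩
  calc d ≤ sInf (nonnegPreimageDualNorms A nm (Aᵀ *ᵥ w)) * nm z := by
        refine le_csInf_mul_of_forall_le hne (apply_nonneg _ _) ?_
        rintro _ ⟨y, hy, hyw, rfl⟩
        rw [← hvu, ← hyw, mulVec_transpose, ← dotProduct_mulVec]
        exact dotProduct_le_dualNorm_mul_posPart hnm hy _
    _ ≤ _ := by
      gcongr
      exact le_csSup (bddAbove_sInf_nonnegPreimageDualNorms A hnn hnm hyhatpos hyhat)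
        ⟨_, ⟨w, rfl⟩, hv, rfl⟩

/-- Proposition 2 (pointwise form): if `Aᵀ yhat = 0` for some `yhat > 0`, then
`H₀(A) ≤ sup { inf {‖y‖* : y ≥ 0, Aᵀ y = v} : v ∈ Aᵀ(ℝᵐ), ‖v‖* ≤ 1 }`.
Norms are definite seminorms `nn`, `nm`, with `nm` componentwise compatible. -/
theorem stmt6 {m n : ℕ} (A : Matrix (Fin m) (Fin n) ℝ)
    (nn : Seminorm ℝ (Fin n → ℝ)) (nm : Seminorm ℝ (Fin m → ℝ))
    (hnn : ∀ x, nn x = 0 → x = 0) (hnm : ∀ y, nm y = 0 → y = 0)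
    (hcompat : ∀ y z : Fin m → ℝ, (∀ i, |y i| ≤ |z i|) → nm y ≤ nm z)
    (yhat : Fin m → ℝ) (hyhatpos : ∀ i, 0 < yhat i)
    (hyhat : A.transpose.mulVec yhat = 0) :
    ∀ u : Fin n → ℝ, (¬ ∀ i, A.mulVec u i ≤ 0) →
      sInf {r | ∃ x, (∀ i, A.mulVec x i ≤ 0) ∧ r = nn (u - x)} ≤
        (sSup {r | ∃ v : Fin n → ℝ, (∃ w, A.transpose.mulVec w = v) ∧
            dualNorm nn v ≤ 1 ∧
            r = sInf {s | ∃ y : Fin m → ℝ, (∀ i, 0 ≤ y i) ∧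
              A.transpose.mulVec y = v ∧ s = dualNorm nm y}}) *
          nm (fun i => max (A.mulVec u i) 0) :=
  stmt6_general A nn nm hnn hnm yhat hyhatpos hyhat
end

section
/- Let A ∈ ℝ^{m×n} with m ≥ 1, ȳ > 0 componentwise with 𝟏ᵀ ȳ = 1 and Aᵀ ȳ = 0, and let Ȳ = Diag(ȳ). If ℝ^m carries the ℓ∞ norm and ℝⁿ the ℓ₂ norm, then H₀(A) ≤ 2/σ⁺min(Aᵀ Ȳ), where σ⁺min denotes the smallest positive singular value. -/
/-- The Euclidean (ℓ₂) norm on `Fin k → ℝ`. -/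
noncomputable def e2norm {k : ℕ} (v : Fin k → ℝ) : ℝ := Real.sqrt (∑ i, v i ^ 2)

/-- The smallest positive singular value of `M`, characterized as the infimum of
`‖M v‖₂` over unit vectors `v` in the row space `range(Mᵀ)` of `M`. -/
noncomputable def sigmaMinPos {p q : ℕ} (M : Matrix (Fin p) (Fin q) ℝ) : ℝ :=
  sInf {r | ∃ v : Fin q → ℝ, (∃ w, M.transpose.mulVec w = v) ∧ e2norm v = 1 ∧
    r = e2norm (M.mulVec v)}

/-! With `N = Ȳ A`, the kernels of `A` and `N` coincide, so any `x ∈ ker N` is feasible. Solving the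
normal equations twice gives `x ∈ ker N` with `u - x = Nᵀ w` and `w ∈ range N`; then
`‖u - x‖² = ⟨w, N u⟩ ≤ ‖w‖ ‖N u‖` and `σ ‖w‖ ≤ ‖Nᵀ w‖ = ‖u - x‖` for `σ = σ⁺min(Nᵀ)`, hence
`σ ‖u - x‖ ≤ ‖N u‖₂ ≤ ‖N u‖₁ = ∑ ȳᵢ |(A u)ᵢ|`. Because `ȳᵀ A u = 0`, the positive and negative parts
of `A u` carry the same `ȳ`-weight, so this sum is `2 ∑ ȳᵢ (A u)ᵢ⁺ ≤ 2 ‖(A u)⁺‖∞`. -/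

open Matrix

section e2norm

variable {k : ℕ}

lemma e2norm_eq_norm_toLp (v : Fin k → ℝ) :
    e2norm v = ‖(WithLp.toLp 2 v : EuclideanSpace ℝ (Fin k))‖ := by
  simp [e2norm, EuclideanSpace.norm_eq]

lemma e2norm_nonneg (v : Fin k → ℝ) : 0 ≤ e2norm v := Real.sqrt_nonneg _

lemma e2norm_zero : e2norm (0 : Fin k → ℝ) = 0 := by simp [e2norm]

lemma e2norm_smul (c : ℝ) (v : Fin k → ℝ) : e2norm (c • v) = |c| * e2norm v := by
  simp only [e2norm_eq_norm_toLp, WithLp.toLp_smul, norm_smul, Real.norm_eq_abs]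

lemma e2norm_sq (v : Fin k → ℝ) : e2norm v ^ 2 = v ⬝ᵥ v := by
  rw [e2norm, Real.sq_sqrt (by positivity)]
  simp [dotProduct, sq]

lemma dotProduct_le_e2norm_mul (v w : Fin k → ℝ) : v ⬝ᵥ w ≤ e2norm v * e2norm w := by
  have := real_inner_le_norm (WithLp.toLp 2 v : EuclideanSpace ℝ (Fin k)) (WithLp.toLp 2 w)
  simpa [e2norm_eq_norm_toLp, EuclideanSpace.inner_eq_star_dotProduct, dotProduct_comm] using this

lemma e2norm_le_sum_abs (v : Fin k → ℝ) : e2norm v ≤ ∑ i, |v i| := by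
  rw [e2norm, Real.sqrt_le_left (by positivity)]
  simpa [sq_abs] using Finset.sum_sq_le_sq_sum_of_nonneg (s := Finset.univ)
    (f := fun i => |v i|) (fun i _ => abs_nonneg _)

lemma e2norm_pos {v : Fin k → ℝ} (hv : v ≠ 0) : 0 < e2norm v := by
  rw [e2norm_eq_norm_toLp, norm_pos_iff]
  exact fun h => hv (congrArg WithLp.ofLp h)

lemma e2norm_inv_smul_self {v : Fin k → ℝ} (hv : v ≠ 0) : e2norm ((e2norm v)⁻¹ • v) = 1 := by
  rw [e2norm_smul, abs_inv, abs_of_pos (e2norm_pos hv), inv_mul_cancel₀ (e2norm_pos hv).ne']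

end e2norm

theorem Matrix.exists_mul_transpose_mulVec_eq {R : Type*} [Field R] [LinearOrder R]
    [IsStrictOrderedRing R] {m n : Type*} [Fintype m] [Fintype n]
    (M : Matrix m n R) (u : n → R) : ∃ w, (M * Mᵀ) *ᵥ w = M *ᵥ u := by
  have hrange : LinearMap.range (M * Mᵀ).mulVecLin = LinearMap.range M.mulVecLin := by
    refine Submodule.eq_of_le_of_finrank_eq ?_ ?_
    · rw [mulVecLin_mul]
      exact LinearMap.range_comp_le_range _ _
    · exact rank_self_mul_transpose M
  obtain ⟨w, hw⟩ : M *ᵥ u ∈ LinearMap.range (M * Mᵀ).mulVecLin := hrange ▸ ⟨u, rfl⟩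
  exact ⟨w, hw⟩

theorem Matrix.transpose_mulVec_eq_zero_of_mulVec {R : Type*} [Field R] [LinearOrder R]
    [IsStrictOrderedRing R] {m n : Type*} [Fintype m] [Fintype n] (M : Matrix m n R)
    {w : m → R} (h : M *ᵥ (Mᵀ *ᵥ w) = 0) : Mᵀ *ᵥ w = 0 := by
  rw [← dotProduct_self_eq_zero, dotProduct_transpose_mulVec, h, dotProduct_zero]

section sigmaMinPos

variable {p q : ℕ}

lemma sigmaMinPos_nonneg (M : Matrix (Fin p) (Fin q) ℝ) : 0 ≤ sigmaMinPos M :=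
  Real.sInf_nonneg fun _ ⟨_, _, _, hr⟩ => hr ▸ e2norm_nonneg _

lemma sigmaMinPos_mul_e2norm_le (M : Matrix (Fin p) (Fin q) ℝ) {v : Fin q → ℝ}
    (hv : ∃ w, Mᵀ *ᵥ w = v) : sigmaMinPos M * e2norm v ≤ e2norm (M *ᵥ v) := by
  obtain ⟨w, rfl⟩ := hv
  by_cases h0 : Mᵀ *ᵥ w = 0
  · simp [h0, e2norm_zero]
  have hpos := e2norm_pos h0
  have hle : sigmaMinPos M ≤ e2norm (M *ᵥ ((e2norm (Mᵀ *ᵥ w))⁻¹ • (Mᵀ *ᵥ w))) :=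
    csInf_le ⟨0, fun _ ⟨_, _, _, hr⟩ => hr ▸ e2norm_nonneg _⟩
      ⟨_, ⟨_ • w, mulVec_smul _ _ _⟩, e2norm_inv_smul_self h0, rfl⟩
  rw [mulVec_smul, e2norm_smul, abs_inv, abs_of_pos hpos] at hle
  rwa [← le_div_iff₀ hpos, div_eq_inv_mul]

lemma sigmaMinPos_pos {M : Matrix (Fin p) (Fin q) ℝ} (hM : M ≠ 0) : 0 < sigmaMinPos M := by
  set V := LinearMap.range (toEuclideanLin Mᵀ)
  have hker : LinearMap.ker ((toEuclideanLin M).domRestrict V) = ⊥ := by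
    refine LinearMap.ker_eq_bot'.mpr fun ⟨_, w, hw⟩ hy => ?_
    subst hw
    exact Subtype.ext (congrArg (WithLp.toLp 2)
      (M.transpose_mulVec_eq_zero_of_mulVec (congrArg WithLp.ofLp hy)))
  obtain ⟨K, hK0, hK⟩ := LinearMap.exists_antilipschitzWith _ hker
  have hbound : ∀ r ∈ {r | ∃ v : Fin q → ℝ, (∃ w, Mᵀ *ᵥ w = v) ∧ e2norm v = 1 ∧
      r = e2norm (M *ᵥ v)}, (K : ℝ)⁻¹ ≤ r := by
    rintro _ ⟨v, ⟨w, rfl⟩, hv, rfl⟩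
    have := hK.le_mul_norm_sub (⟨_, LinearMap.mem_range_self _ (WithLp.toLp 2 w)⟩ : V) 0
    simp only [toLpLin_toLp, toLin'_apply, add_zero, norm_neg, Submodule.coe_norm,
      LinearMap.domRestrict_apply, mulVec_mulVec, map_zero] at this
    rw [← e2norm_eq_norm_toLp, ← e2norm_eq_norm_toLp, hv, ← mulVec_mulVec] at this
    rwa [inv_le_iff_one_le_mul₀' (by positivity)]
  obtain ⟨w, hw⟩ : ∃ w, Mᵀ *ᵥ w ≠ 0 := by
    by_contra! h
    exact hM (transpose_eq_zero.mp (ext_iff_mulVec.mpr fun w => by rw [h w, zero_mulVec]))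
  refine (show (0 : ℝ) < (K : ℝ)⁻¹ by positivity).trans_le (le_csInf ?_ hbound)
  exact ⟨_, _, ⟨_ • w, mulVec_smul _ _ _⟩, e2norm_inv_smul_self hw, rfl⟩

end sigmaMinPos

theorem Matrix.exists_mulVec_eq_zero_sigmaMinPos_transpose_mul_le {p q : ℕ}
    (N : Matrix (Fin p) (Fin q) ℝ) (u : Fin q → ℝ) :
    ∃ x, N *ᵥ x = 0 ∧ sigmaMinPos Nᵀ * e2norm (u - x) ≤ e2norm (N *ᵥ u) := by
  obtain ⟨w, hw⟩ := N.exists_mul_transpose_mulVec_eq u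
  obtain ⟨z, hz⟩ := Nᵀ.exists_mul_transpose_mulVec_eq w
  set d := Nᵀ *ᵥ w
  have hNd : N *ᵥ d = N *ᵥ u := by rw [mulVec_mulVec, hw]
  have hd : Nᵀ *ᵥ (N *ᵥ z) = d := by rw [mulVec_mulVec, ← hz, transpose_transpose]
  refine ⟨u - d, by rw [mulVec_sub, hNd, sub_self], ?_⟩
  rw [sub_sub_cancel]
  have hσ : sigmaMinPos Nᵀ * e2norm (N *ᵥ z) ≤ e2norm d :=
    hd ▸ sigmaMinPos_mul_e2norm_le Nᵀ ⟨z, by rw [transpose_transpose]⟩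
  have hd2 : e2norm d ^ 2 ≤ e2norm (N *ᵥ z) * e2norm (N *ᵥ u) :=
    calc e2norm d ^ 2 = d ⬝ᵥ Nᵀ *ᵥ (N *ᵥ z) := by rw [e2norm_sq, hd]
      _ = (N *ᵥ z) ⬝ᵥ N *ᵥ d := dotProduct_transpose_mulVec _ _ _
      _ ≤ e2norm (N *ᵥ z) * e2norm (N *ᵥ u) := hNd ▸ dotProduct_le_e2norm_mul _ _
  rcases (e2norm_nonneg d).eq_or_lt with h0 | hpos
  · rw [← h0, mul_zero]
    exact e2norm_nonneg _
  refine le_of_mul_le_mul_right ?_ hpos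
  calc sigmaMinPos Nᵀ * e2norm d * e2norm d
        ≤ sigmaMinPos Nᵀ * e2norm (N *ᵥ z) * e2norm (N *ᵥ u) := by
        rw [mul_assoc, mul_assoc, ← sq]
        exact mul_le_mul_of_nonneg_left hd2 (sigmaMinPos_nonneg _)
    _ ≤ e2norm (N *ᵥ u) * e2norm d := by
        rw [mul_comm (e2norm (N *ᵥ u))]
        exact mul_le_mul_of_nonneg_right hσ (e2norm_nonneg _)

lemma sum_mul_abs_le_two_mul_norm_max_zero {ι : Type*} [Fintype ι] {y g : ι → ℝ}
    (hy : ∀ i, 0 ≤ y i) (hsum : ∑ i, y i = 1) (horth : ∑ i, y i * g i = 0) :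
    ∑ i, y i * |g i| ≤ 2 * ‖fun i => max (g i) 0‖ := by
  set c := ‖fun i => max (g i) 0‖
  have hmax : ∀ i, max (g i) 0 ≤ c := fun i =>
    (le_abs_self _).trans (norm_le_pi_norm (fun i => max (g i) 0) i)
  calc ∑ i, y i * |g i| = ∑ i, (2 * (y i * max (g i) 0) - y i * g i) := by
        refine Finset.sum_congr rfl fun i _ => ?_
        rcases le_total 0 (g i) with h | h
        · rw [abs_of_nonneg h, max_eq_left h]; ring
        · rw [abs_of_nonpos h, max_eq_right h]; ring
    _ = 2 * ∑ i, y i * max (g i) 0 := by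
        rw [Finset.sum_sub_distrib, horth, ← Finset.mul_sum, sub_zero]
    _ ≤ 2 * ∑ i, y i * c := by
        gcongr with i
        exacts [hy i, hmax i]
    _ = 2 * c := by rw [← Finset.sum_mul, hsum, one_mul]

lemma e2norm_diagonal_mul_mulVec_le {m : ℕ} {ι : Type*} [Fintype ι] (A : Matrix (Fin m) ι ℝ)
    {y : Fin m → ℝ} (hy : ∀ i, 0 ≤ y i) (hsum : ∑ i, y i = 1) (hker : Aᵀ *ᵥ y = 0)
    (u : ι → ℝ) :
    e2norm ((diagonal y * A) *ᵥ u) ≤ 2 * ‖fun i => max ((A *ᵥ u) i) 0‖ := by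
  have horth : ∑ i, y i * (A *ᵥ u) i = 0 := by
    simpa [hker, dotProduct] using (dotProduct_transpose_mulVec A u y).symm
  calc e2norm ((diagonal y * A) *ᵥ u) ≤ ∑ i, |((diagonal y * A) *ᵥ u) i| := e2norm_le_sum_abs _
    _ = ∑ i, y i * |(A *ᵥ u) i| := by
        simp only [← mulVec_mulVec, mulVec_diagonal, abs_mul, abs_of_nonneg (hy _)]
    _ ≤ 2 * ‖fun i => max ((A *ᵥ u) i) 0‖ := sum_mul_abs_le_two_mul_norm_max_zero hy hsum horth

theorem stmt9_general {m n : ℕ} (A : Matrix (Fin m) (Fin n) ℝ)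
    (ybar : Fin m → ℝ) (hpos : ∀ i, 0 < ybar i) (hsum : ∑ i, ybar i = 1)
    (hker : A.transpose.mulVec ybar = 0) :
    ∀ u : Fin n → ℝ, (¬ ∀ i, A.mulVec u i ≤ 0) →
      sInf {r | ∃ x, (∀ i, A.mulVec x i ≤ 0) ∧ r = e2norm (u - x)} ≤
        (2 / sigmaMinPos (A.transpose * Matrix.diagonal ybar)) *
          ‖(fun i => max (A.mulVec u i) 0 : Fin m → ℝ)‖ := by
  intro u hu
  set N := diagonal ybar * A
  have hN : ∀ x i, (N *ᵥ x) i = ybar i * (A *ᵥ x) i := fun x i => by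
    rw [← mulVec_mulVec, mulVec_diagonal]
  have hNu : N *ᵥ u ≠ 0 := by
    obtain ⟨i, hi⟩ := not_forall.mp hu
    refine fun h => (mul_pos (hpos i) (not_le.mp hi)).ne' ?_
    rw [← hN, h, Pi.zero_apply]
  have hσ : 0 < sigmaMinPos Nᵀ :=
    sigmaMinPos_pos fun h => hNu (by rw [transpose_eq_zero.mp h, zero_mulVec])
  obtain ⟨x, hx, hdist⟩ := N.exists_mulVec_eq_zero_sigmaMinPos_transpose_mul_le u
  have hAx : ∀ i, (A *ᵥ x) i ≤ 0 := fun i =>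
    ((mul_eq_zero.mp ((hN x i).symm.trans (congrFun hx i))).resolve_left (hpos i).ne').le
  rw [show Aᵀ * diagonal ybar = Nᵀ by rw [transpose_mul, diagonal_transpose]]
  calc sInf {r | ∃ x, (∀ i, (A *ᵥ x) i ≤ 0) ∧ r = e2norm (u - x)}
      ≤ e2norm (u - x) := csInf_le ⟨0, fun _ ⟨_, _, hr⟩ => hr ▸ e2norm_nonneg _⟩ ⟨x, hAx, rfl⟩
    _ ≤ e2norm (N *ᵥ u) / sigmaMinPos Nᵀ := by rwa [le_div_iff₀ hσ, mul_comm]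
    _ ≤ 2 * ‖fun i => max ((A *ᵥ u) i) 0‖ / sigmaMinPos Nᵀ := by
        gcongr
        exact e2norm_diagonal_mul_mulVec_le A (fun i => (hpos i).le) hsum hker u
    _ = 2 / sigmaMinPos Nᵀ * ‖fun i => max ((A *ᵥ u) i) 0‖ := by ring

/-- If `ybar > 0`, `𝟏ᵀ ybar = 1`, `Aᵀ ybar = 0`, `Ybar = Diag(ybar)`, with `ℓ∞`
norm on `ℝᵐ` and `ℓ₂` norm on `ℝⁿ`, then `H₀(A) ≤ 2/σ⁺min(Aᵀ Ybar)`: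
for every `u` with `A u ≰ 0`,
`dist₂(u, {x : A x ≤ 0}) ≤ (2/σ⁺min(Aᵀ Ybar)) ⬝ ‖(A u)⁺‖∞`. -/
theorem stmt9 {m n : ℕ} (hm : 0 < m) (A : Matrix (Fin m) (Fin n) ℝ)
    (ybar : Fin m → ℝ) (hpos : ∀ i, 0 < ybar i) (hsum : ∑ i, ybar i = 1)
    (hker : A.transpose.mulVec ybar = 0) :
    ∀ u : Fin n → ℝ, (¬ ∀ i, A.mulVec u i ≤ 0) →
      sInf {r | ∃ x, (∀ i, A.mulVec x i ≤ 0) ∧ r = e2norm (u - x)} ≤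
        (2 / sigmaMinPos (A.transpose * Matrix.diagonal ybar)) *
          ‖(fun i => max (A.mulVec u i) 0 : Fin m → ℝ)‖ :=
  stmt9_general A ybar hpos hsum hker
end
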